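/- Let X ⊆ ℝ^d and suppose C : ℝ^K ⇉ X is a continuous compact-valued correspondence, X and M ⊆ ℝ^K are compact, and for every x ∈ X the set ¬x = {λ ∈ M : x ∉ C(λ)} is nonempty. Assume additionally that for every μ ∈ M there exists x ∈ C(μ) with μ ∉ cl(¬x). Then there exists ρ > 0 such that for all x ∈ X, the set ¬B_ρ(x) = {λ ∈ M : ∀ x' with ‖x' − x‖_∞ ≤ ρ, x' ∉ C(λ)} is nonempty. -/

import Mathlib

/-!
Each `x ∈ X` lies in the open complement of some closed set `C λ` with `λ ∈ M`, so these
complements cover the compact set `X`. A Lebesgue number `ρ` of this cover is the required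
radius: every closed ball `B_ρ(x)` misses some `C λ`.
-/

open Metric Set

theorem lebesgue_number_lemma_of_metric_closedBall {α : Type*} [PseudoMetricSpace α] {s : Set α}
    {ι : Sort*} {c : ι → Set α} (hs : IsCompact s) (hc₁ : ∀ i, IsOpen (c i))
    (hc₂ : s ⊆ ⋃ i, c i) : ∃ δ > 0, ∀ x ∈ s, ∃ i, closedBall x δ ⊆ c i := by
  obtain ⟨δ, hδ, hball⟩ := lebesgue_number_lemma_of_metric hs hc₁ hc₂
  refine ⟨δ / 2, half_pos hδ, fun x hx => ?_⟩
  obtain ⟨i, hi⟩ := hball x hx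
  exact ⟨i, (closedBall_subset_ball (half_lt_self hδ)).trans hi⟩

theorem extended_alternatives_nonempty_general {d K : ℕ}
    (X : Set (Fin d → ℝ)) (M : Set (Fin K → ℝ))
    (hX : IsCompact X)
    (C : (Fin K → ℝ) → Set (Fin d → ℝ))
    (hCcomp : ∀ lam, IsCompact (C lam))
    (hnot : ∀ x ∈ X, ({lam ∈ M | x ∉ C lam}).Nonempty) :
    ∃ ρ > (0:ℝ), ∀ x ∈ X,
      ({lam ∈ M | ∀ x' ∈ X, dist x' x ≤ ρ → x' ∉ C lam}).Nonempty := by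
  have hcover : X ⊆ ⋃ lam : M, (C lam)ᶜ := fun x hx => by
    obtain ⟨lam, hlamM, hx_notin⟩ := hnot x hx
    exact mem_iUnion.mpr ⟨⟨lam, hlamM⟩, hx_notin⟩
  obtain ⟨ρ, hρ, hsub⟩ := lebesgue_number_lemma_of_metric_closedBall hX
    (fun lam : M => (hCcomp lam).isClosed.isOpen_compl) hcover
  refine ⟨ρ, hρ, fun x hx => ?_⟩
  obtain ⟨⟨lam, hlamM⟩, hlam⟩ := hsub x hx
  exact ⟨lam, hlamM, fun x' _ hdist => hlam (mem_closedBall.mpr hdist)⟩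

/-- Extended alternative sets are nonempty: under continuity and compactness assumptions
there exists `ρ > 0` such that `¬B_ρ(x) ≠ ∅` for all `x ∈ X`. -/
theorem extended_alternatives_nonempty {d K : ℕ}
    (X : Set (Fin d → ℝ)) (M : Set (Fin K → ℝ))
    (hX : IsCompact X) (hM : IsCompact M)
    (C : (Fin K → ℝ) → Set (Fin d → ℝ))
    (hCsub : ∀ lam, C lam ⊆ X)
    (hCcomp : ∀ lam, IsCompact (C lam))
    (hCne : ∀ lam ∈ M, (C lam).Nonempty)
    (huhc : ∀ lam, ∀ V : Set (Fin d → ℝ), IsOpen V → C lam ⊆ V →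
      ∃ U ∈ nhds lam, ∀ lam' ∈ U, C lam' ⊆ V)
    (hlhc : ∀ lam, ∀ V : Set (Fin d → ℝ), IsOpen V → (C lam ∩ V).Nonempty →
      ∃ U ∈ nhds lam, ∀ lam' ∈ U, (C lam' ∩ V).Nonempty)
    (hnot : ∀ x ∈ X, ({lam ∈ M | x ∉ C lam}).Nonempty)
    (hid : ∀ μ ∈ M, ∃ x ∈ C μ, μ ∉ closure {lam ∈ M | x ∉ C lam}) :
    ∃ ρ > (0:ℝ), ∀ x ∈ X,
      ({lam ∈ M | ∀ x' ∈ X, dist x' x ≤ ρ → x' ∉ C lam}).Nonempty :=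
  extended_alternatives_nonempty_general X M hX C hCcomp hnot
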